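/- arXiv:1309.2212 — 7 statements merged into one kernel-verified Lean document; each statement's English description precedes it below -/
import Mathlib

section
/- Let V be an n-dimensional vector space over F_q, let S be an i-dimensional subspace and S' an f-dimensional subspace with S ∩ S' = {0}. Then the number of e-dimensional subspaces T of V with S ⊆ T and T ∩ S' = {0} equals q^(f(e-i)) · C_q(n-i-f, e-i). -/
/-- The Gaussian binomial coefficient `C_q(a,k) = ∏_{0 ≤ i < k} (q^(a-i)-1)/(q^(k-i)-1)`. -/
noncomputable def gbinom (q : ℝ) (a k : ℕ) : ℝ :=
  ∏ i ∈ Finset.range k, (q ^ (a - i) - 1) / (q ^ (k - i) - 1)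

/-!
Modulo `S`, the subspaces `T ⊇ S` of dimension `e` meeting `S'` trivially become the subspaces of
dimension `e - i` of `V ⧸ S` meeting the image of `S'` (still of dimension `f`) trivially.
The `k`-dimensional subspaces `U` of a space `V` with `U ∩ W = 0` are counted by double counting
the `k`-tuples of `V` that stay linearly independent modulo `W`: such a tuple is a lift of an
independent tuple of `V ⧸ W`, in `|W|^k = q^(k dim W)` ways, and it is also an ordered basis of
the subspace it spans, which meets `W` trivially. Dividing by the number of ordered bases of a
`k`-dimensional space gives `q^(k dim W)` times the Gaussian binomial `C_q(dim V - dim W, k)`.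
-/

open Module Submodule

section GaussianBinomial

variable {q : ℝ}

lemma gbinom_eq_zero_of_lt {a k : ℕ} (h : a < k) : gbinom q a k = 0 :=
  Finset.prod_eq_zero (Finset.mem_range.mpr h) (by simp)

lemma gbinom_mul_prod_pow_sub (hq : 1 < q) {a k : ℕ} (hk : k ≤ a) :
    gbinom q a k * ∏ j ∈ Finset.range k, (q ^ k - q ^ j)
      = ∏ j ∈ Finset.range k, (q ^ a - q ^ j) := by
  rw [gbinom, ← Finset.prod_mul_distrib]
  refine Finset.prod_congr rfl fun j hj => ?_
  have hjk : j < k := Finset.mem_range.mp hj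
  have hpow (m : ℕ) (hm : j ≤ m) : q ^ m - q ^ j = q ^ j * (q ^ (m - j) - 1) := by
    rw [mul_sub, mul_one, ← pow_add, Nat.add_sub_cancel' hm]
  have hne : q ^ (k - j) - 1 ≠ 0 := (sub_pos.mpr (one_lt_pow₀ hq (by omega))).ne'
  rw [hpow k hjk.le, hpow a (by omega)]
  field_simp

end GaussianBinomial

lemma Nat.cast_prod_pow_sub_pow {R : Type*} [CommRing R] {q a k : ℕ} (hq : 0 < q)
    (hk : k ≤ a) :
    ((∏ j : Fin k, (q ^ a - q ^ (j : ℕ)) : ℕ) : R)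
      = ∏ j ∈ Finset.range k, ((q : R) ^ a - q ^ j) := by
  rw [Nat.cast_prod, Fin.prod_univ_eq_prod_range (fun j => ((q ^ a - q ^ j : ℕ) : R))]
  refine Finset.prod_congr rfl fun j hj => ?_
  rw [Nat.cast_sub (Nat.pow_le_pow_right hq (by simp at hj; omega))]
  push_cast
  rfl

theorem AddMonoidHom.card_subtype_comp_of_surjective {A B : Type*} [AddGroup A] [AddGroup B]
    [Finite A] {g : A →+ B} (hg : Function.Surjective g) (P : B → Prop) :
    Nat.card {a // P (g a)} = Nat.card {b // P b} * Nat.card g.ker := by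
  have : Finite B := Finite.of_surjective g hg
  have : Fintype {b // P b} := Fintype.ofFinite _
  have e : {a // P (g a)} ≃ Σ b : {b // P b}, g ⁻¹' {b.1} :=
    ((Equiv.sigmaPreimageEquiv g).symm.subtypeEquiv fun _ => Iff.rfl).trans
      (Equiv.subtypeSigmaEquiv _ P)
  rw [Nat.card_congr e, Nat.card_sigma,
    Finset.sum_congr rfl fun b _ => Nat.card_congr (g.fiberEquivKerOfSurjective hg b.1),
    Finset.sum_const, Finset.card_univ, smul_eq_mul, ← Nat.card_eq_fintype_card]

theorem linearIndependent_comp_iff_and_disjoint_ker {R M N ι : Type*} [Ring R] [AddCommGroup M]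
    [Module R M] [AddCommGroup N] [Module R N] {f : M →ₗ[R] N} {v : ι → M} :
    LinearIndependent R (f ∘ v) ↔
      LinearIndependent R v ∧ Disjoint (span R (Set.range v)) (LinearMap.ker f) :=
  ⟨fun h => ⟨h.of_comp f, range_ker_disjoint h⟩, fun ⟨h, hd⟩ => h.map hd⟩

theorem Submodule.disjoint_comap_iff_disjoint_map {R M N : Type*} [Ring R] [AddCommGroup M]
    [Module R M] [AddCommGroup N] [Module R N] {f : M →ₗ[R] N} {U : Submodule R N}
    {W : Submodule R M} (hW : Disjoint W (LinearMap.ker f)) :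
    Disjoint (U.comap f) W ↔ Disjoint U (W.map f) := by
  simp only [Submodule.disjoint_def]
  constructor
  · rintro h _ hyU ⟨w, hw, rfl⟩
    rw [h w hyU hw, map_zero]
  · intro h x hxU hxW
    exact Submodule.disjoint_def.mp hW x hxW (h (f x) hxU (mem_map_of_mem hxW))

section Counting

variable {K V : Type*} [DivisionRing K] [AddCommGroup V] [Module K V] [FiniteDimensional K V]

theorem Submodule.finrank_comap_mkQ (S : Submodule K V) (U : Submodule K (V ⧸ S)) :
    finrank K (U.comap S.mkQ) = finrank K S + finrank K U := by
  have hiso := (S.quotientQuotientEquivQuotient (U.comap S.mkQ) (S.le_comap_mkQ U)).finrank_eq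
  rw [map_comap_eq_of_surjective S.mkQ_surjective] at hiso
  have h₁ := (U.comap S.mkQ).finrank_quotient_add_finrank
  have h₂ := U.finrank_quotient_add_finrank
  have h₃ := S.finrank_quotient_add_finrank
  omega

theorem Submodule.finrank_map_mkQ_of_disjoint {S W : Submodule K V} (hSW : Disjoint S W) :
    finrank K (W.map S.mkQ) = finrank K W := by
  have h := finrank_comap_mkQ S (W.map S.mkQ)
  have hsum := finrank_sup_add_finrank_inf_eq S W
  rw [comap_map_mkQ] at h
  rw [disjoint_iff.mp hSW, finrank_bot] at hsum
  omega

theorem card_finrank_eq_le_disjoint_eq_card_quotient (S W : Submodule K V) (hSW : Disjoint S W)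
    (k : ℕ) :
    Nat.card {T : Submodule K V // finrank K T = finrank K S + k ∧ S ≤ T ∧ Disjoint T W}
      = Nat.card {U : Submodule K (V ⧸ S) // finrank K U = k ∧ Disjoint U (W.map S.mkQ)} := by
  have hW : Disjoint W (LinearMap.ker S.mkQ) := by rw [ker_mkQ]; exact hSW.symm
  have hcomap_map {T : Submodule K V} (hST : S ≤ T) : (T.map S.mkQ).comap S.mkQ = T := by
    rw [comap_map_mkQ, sup_eq_right.mpr hST]
  refine Nat.card_congr
    { toFun T := ⟨T.1.map S.mkQ, ?_, ?_⟩
      invFun U := ⟨U.1.comap S.mkQ, ?_, S.le_comap_mkQ U.1, ?_⟩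
      left_inv T := Subtype.ext (hcomap_map T.2.2.1)
      right_inv U := Subtype.ext (map_comap_eq_of_surjective S.mkQ_surjective U.1) }
  · have h := finrank_comap_mkQ S (T.1.map S.mkQ)
    rw [hcomap_map T.2.2.1, T.2.1] at h
    omega
  · rw [← disjoint_comap_iff_disjoint_map hW, hcomap_map T.2.2.1]
    exact T.2.2.2
  · rw [finrank_comap_mkQ, U.2.1]
  · exact (disjoint_comap_iff_disjoint_map hW).mpr U.2.2

variable [Fintype K]

local notation "q" => Fintype.card K

theorem card_linearIndependent_comp_mkQ (W : Submodule K V) {k : ℕ}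
    (hk : k ≤ finrank K (V ⧸ W)) :
    Nat.card {v : Fin k → V // LinearIndependent K (W.mkQ ∘ v)}
      = (∏ j : Fin k, (q ^ finrank K (V ⧸ W) - q ^ (j : ℕ))) * q ^ (finrank K W * k) := by
  have := Module.finite_of_finite K (M := V)
  have := Module.finite_of_finite K (M := V ⧸ W)
  let g := W.mkQ.toAddMonoidHom.compLeft (Fin k)
  have hker : g.ker ≃ (Fin k → W) :=
    (Equiv.subtypeEquivRight fun v => by simp [g, funext_iff]).trans
      (Equiv.subtypePiEquivPi (p := fun _ x => x ∈ W))
  refine (g.card_subtype_comp_of_surjective W.mkQ_surjective.comp_left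
    (fun w => LinearIndependent K w)).trans ?_
  have : Fintype W := Fintype.ofFinite W
  rw [card_linearIndependent hk, Nat.card_congr hker, Nat.card_fun,
    Nat.card_eq_fintype_card (α := W), Module.card_eq_pow_finrank (K := K) (V := W), Nat.card_fin,
    ← pow_mul]

theorem card_linearIndependent_and_span_eq (U : Submodule K V) {k : ℕ} (hU : finrank K U = k) :
    Nat.card {v : Fin k → V // LinearIndependent K v ∧ span K (Set.range v) = U}
      = ∏ j : Fin k, (q ^ k - q ^ (j : ℕ)) := by
  have := Module.finite_of_finite K (M := U)
  have e : {v : Fin k → V // LinearIndependent K v ∧ span K (Set.range v) = U}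
      ≃ {w : Fin k → U // LinearIndependent K w} :=
    { toFun v := ⟨fun j => ⟨v.1 j, v.2.2.le (subset_span ⟨j, rfl⟩)⟩,
        v.2.1.of_comp U.subtype⟩
      invFun w := ⟨U.subtype ∘ w.1, w.2.map' _ U.ker_subtype, by
        rw [Set.range_comp, span_image, w.2.span_eq_top_of_card_eq_finrank' (by simp [hU]),
          map_subtype_top]⟩
      left_inv _ := rfl
      right_inv _ := rfl }
  rw [Nat.card_congr e, card_linearIndependent hU.ge, hU]

theorem card_linearIndependent_and_pred_span (P : Submodule K V → Prop) (k : ℕ) :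
    Nat.card {v : Fin k → V // LinearIndependent K v ∧ P (span K (Set.range v))}
      = Nat.card {U : Submodule K V // finrank K U = k ∧ P U}
        * ∏ j : Fin k, (q ^ k - q ^ (j : ℕ)) := by
  have := Module.finite_of_finite K (M := V)
  let span' (v : {v : Fin k → V // LinearIndependent K v ∧ P (span K (Set.range v))}) :
      {U : Submodule K V // finrank K U = k ∧ P U} :=
    ⟨span K (Set.range v.1), by rw [finrank_span_eq_card v.2.1, Fintype.card_fin], v.2.2⟩
  have hfiber (U : {U : Submodule K V // finrank K U = k ∧ P U}) :
      {v // span' v = U}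
        ≃ {v : Fin k → V // LinearIndependent K v ∧ span K (Set.range v) = U} :=
    { toFun v := ⟨v.1.1, v.1.2.1, congrArg Subtype.val v.2⟩
      invFun v := ⟨⟨v.1, v.2.1, by rw [v.2.2]; exact U.2.2⟩, Subtype.ext v.2.2⟩
      left_inv _ := rfl
      right_inv _ := rfl }
  have : Fintype {U : Submodule K V // finrank K U = k ∧ P U} := Fintype.ofFinite _
  rw [← Nat.card_congr (Equiv.sigmaFiberEquiv span'), Nat.card_sigma,
    Finset.sum_congr rfl fun U _ =>
      (Nat.card_congr (hfiber U)).trans (card_linearIndependent_and_span_eq U.1 U.2.1),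
    Finset.sum_const, Finset.card_univ, smul_eq_mul, Nat.card_eq_fintype_card]

theorem card_finrank_eq_disjoint (W : Submodule K V) (k : ℕ) :
    (Nat.card {U : Submodule K V // finrank K U = k ∧ Disjoint U W} : ℝ)
      = (q : ℝ) ^ (finrank K W * k) * gbinom q (finrank K V - finrank K W) k := by
  rw [← W.finrank_quotient]
  rcases le_or_gt k (finrank K (V ⧸ W)) with hk | hk
  · have hq : (1 : ℝ) < q := mod_cast Fintype.one_lt_card
    have hcount := (card_linearIndependent_comp_mkQ W hk).symm.trans <|
      (Nat.card_congr <| Equiv.subtypeEquivRight fun v => by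
        rw [linearIndependent_comp_iff_and_disjoint_ker, ker_mkQ]).trans
      (card_linearIndependent_and_pred_span (Disjoint · W) k)
    have hprod_pos : 0 < ∏ j ∈ Finset.range k, ((q : ℝ) ^ k - q ^ j) :=
      Finset.prod_pos fun j hj =>
        sub_pos.mpr (pow_lt_pow_right₀ hq (Finset.mem_range.mp hj))
    apply mul_right_cancel₀ hprod_pos.ne'
    rw [mul_assoc, gbinom_mul_prod_pow_sub hq hk,
      ← Nat.cast_prod_pow_sub_pow Fintype.card_pos le_rfl,
      ← Nat.cast_prod_pow_sub_pow Fintype.card_pos hk]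
    exact_mod_cast hcount.symm.trans (mul_comm _ _)
  · have : IsEmpty {U : Submodule K V // finrank K U = k ∧ Disjoint U W} := by
      refine ⟨fun ⟨U, hUk, hUW⟩ => ?_⟩
      have hsum := finrank_sup_add_finrank_inf_eq U W
      rw [disjoint_iff.mp hUW, finrank_bot] at hsum
      have := (U ⊔ W).finrank_le
      have := W.finrank_quotient_add_finrank
      omega
    rw [Nat.card_of_isEmpty, gbinom_eq_zero_of_lt hk]
    simp

end Counting

theorem stmt_3_general (q n i f e : ℕ) (K : Type*) [Field K] [Fintype K] (hq : Fintype.card K = q)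
    (V : Type*) [AddCommGroup V] [Module K V] [FiniteDimensional K V]
    (hV : Module.finrank K V = n)
    (S S' : Submodule K V) (hS : Module.finrank K S = i) (hS' : Module.finrank K S' = f)
    (hdisj : S ⊓ S' = ⊥) (hie : i ≤ e) :
    (Nat.card {T : Submodule K V | Module.finrank K T = e ∧ S ≤ T ∧ T ⊓ S' = ⊥} : ℝ)
      = (q : ℝ) ^ (f * (e - i)) * gbinom q (n - i - f) (e - i) := by
  subst hq hV hS hS'
  have hSS' : Disjoint S S' := disjoint_iff.mpr hdisj
  have hset : {T : Submodule K V | finrank K T = e ∧ S ≤ T ∧ T ⊓ S' = ⊥}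
      = {T : Submodule K V |
          finrank K T = finrank K S + (e - finrank K S) ∧ S ≤ T ∧ Disjoint T S'} := by
    simp only [Nat.add_sub_cancel' hie, disjoint_iff]
  rw [hset, Set.coe_ofPred, card_finrank_eq_le_disjoint_eq_card_quotient S S' hSS',
    card_finrank_eq_disjoint, finrank_map_mkQ_of_disjoint hSS', S.finrank_quotient]

theorem stmt_3 (q n i f e : ℕ) (K : Type*) [Field K] [Fintype K] (hq : Fintype.card K = q)
    (V : Type*) [AddCommGroup V] [Module K V] [FiniteDimensional K V]
    (hV : Module.finrank K V = n)
    (S S' : Submodule K V) (hS : Module.finrank K S = i) (hS' : Module.finrank K S' = f)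
    (hdisj : S ⊓ S' = ⊥) (hie : i ≤ e) (hif : i + f ≤ n) :
    (Nat.card {T : Submodule K V | Module.finrank K T = e ∧ S ≤ T ∧ T ⊓ S' = ⊥} : ℝ)
      = (q : ℝ) ^ (f * (e - i)) * gbinom q (n - i - f) (e - i) :=
  stmt_3_general q n i f e K hq V hV S S' hS hS' hdisj hie
end

section
/- Let n = mk + r with 0 ≤ r ≤ k-1, let V be an n-dimensional vector space over F_q, and let U be a (k+r)-dimensional subspace of V. Then there exists a family S of k-dimensional subspaces of V, each having trivial intersection with U, such that every 1-dimensional subspace of V not contained in U lies in exactly one member of S; moreover |S| = q^(k+r)·[n-k-r]/[k], where [m] = (q^m-1)/(q-1). -/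
/-!
Take `V = E × L^t` with `L = 𝔽_{q^k}`, `E = 𝔽_{q^(k+r)}` and `U = E × 0`, and fix a `K`-linear
embedding `ι : L → E`. For a point `⟨x⟩` of the projective space of `L^t` over `L` and `α ∈ E`,
the subspace `{(α ι(c), c x) : c ∈ L}` has dimension `k` over `K` and meets `U` trivially. A vector
`(u, w)` with `w ≠ 0` lies in exactly one of them: `w` determines the point `⟨x⟩` and the scalar
`c`, and then `u = α ι(c)` determines `α` because `E` is a field. Hence
`|S| = |E| · |ℙ(L^t)| = q^(k+r) (q^(tk) - 1) / (q^k - 1)`.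
-/

open Module Function
open scoped LinearAlgebra.Projectivization

section Spread

variable {K V : Type*} [Field K] [AddCommGroup V] [Module K V]

def IsSpreadOutside (U : Submodule K V) (k : ℕ) (S : Set (Submodule K V)) : Prop :=
  (∀ W ∈ S, finrank K W = k ∧ W ⊓ U = ⊥) ∧
    ∀ v : Submodule K V, finrank K v = 1 → ¬ v ≤ U → ∃! W, W ∈ S ∧ v ≤ W

theorem IsSpreadOutside.map_equiv {M : Type*} [AddCommGroup M] [Module K M]
    {U : Submodule K M} {k : ℕ} {S : Set (Submodule K M)} (hS : IsSpreadOutside U k S)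
    (e : M ≃ₗ[K] V) :
    IsSpreadOutside (U.map (e : M →ₗ[K] V)) k (Submodule.map (e : M →ₗ[K] V) '' S) := by
  let φ : Submodule K M ≃o Submodule K V := Submodule.orderIsoMapComap e
  have hφ : ∀ W, φ W = W.map (e : M →ₗ[K] V) := fun _ => rfl
  refine ⟨?_, fun v hv hvU => ?_⟩
  · rintro _ ⟨W, hW, rfl⟩
    obtain ⟨hk, hWU⟩ := hS.1 W hW
    refine ⟨by rw [LinearEquiv.finrank_map_eq, hk], ?_⟩
    rw [← hφ, ← hφ, ← map_inf, hWU, map_bot]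
  · have hv' : finrank K (φ.symm v) = 1 := by
      rw [← hv, ← LinearEquiv.finrank_map_eq e, ← hφ, φ.apply_symm_apply]
    have hvU' : ¬ φ.symm v ≤ U := by rwa [φ.symm_apply_le, hφ]
    obtain ⟨W, ⟨hWS, hvW⟩, huniq⟩ := hS.2 _ hv' hvU'
    refine ⟨φ W, ⟨Set.mem_image_of_mem _ hWS, ?_⟩, ?_⟩
    · rwa [φ.symm_apply_le] at hvW
    · rintro _ ⟨⟨W', hW'S, rfl⟩, hvW'⟩
      rw [huniq W' ⟨hW'S, by rwa [φ.symm_apply_le]⟩, hφ]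

end Spread

theorem Submodule.le_iff_mem_of_finrank_eq_one {K V : Type*} [Field K] [AddCommGroup V]
    [Module K V] {v W : Submodule K V} (hv : finrank K v = 1) {z : V} (hzv : z ∈ v)
    (hz : z ≠ 0) : v ≤ W ↔ z ∈ W := by
  have : FiniteDimensional K v := Module.finite_of_finrank_eq_succ hv
  have hvz : K ∙ z = v := eq_of_le_of_finrank_le ((span_singleton_le_iff_mem z v).2 hzv)
    (by rw [hv, finrank_span_singleton hz])
  rw [← hvz, span_singleton_le_iff_mem]

theorem Projectivization.eq_mk_of_smul_rep_eq {L P : Type*} [DivisionRing L] [AddCommGroup P]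
    [Module L P] {p : ℙ L P} {c : L} {x : P} (hx : x ≠ 0) (h : c • p.rep = x) :
    p = mk L x hx := by
  rw [← p.mk_rep]
  exact ((mk_eq_mk_iff' L _ _ hx p.rep_nonzero).2 ⟨c, h⟩).symm

theorem exists_linearEquiv_prod_map_fst {K V E P : Type*} [Field K] [AddCommGroup V] [Module K V]
    [AddCommGroup E] [Module K E] [AddCommGroup P] [Module K P] [FiniteDimensional K V]
    [FiniteDimensional K E] [FiniteDimensional K P] (U : Submodule K V)
    (hE : finrank K E = finrank K U) (hP : finrank K E + finrank K P = finrank K V) :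
    ∃ e : (E × P) ≃ₗ[K] V, (Submodule.fst K E P).map (e : E × P →ₗ[K] V) = U := by
  obtain ⟨U', hUU'⟩ := U.exists_isCompl
  have hP' : finrank K P = finrank K U' := by
    have := Submodule.finrank_add_eq_of_isCompl hUU'
    omega
  obtain ⟨eE⟩ := FiniteDimensional.nonempty_linearEquiv_of_finrank_eq hE
  obtain ⟨eP⟩ := FiniteDimensional.nonempty_linearEquiv_of_finrank_eq hP'
  refine ⟨(eE.prodCongr eP).trans (Submodule.prodEquivOfIsCompl U U' hUU'), ?_⟩
  ext x
  simp [Submodule.fst]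

section Model

variable {K L E P : Type*} [Field K] [Field L] [Field E] [Algebra K L] [Algebra K E]
  [AddCommGroup P] [Module K P] [Module L P] [IsScalarTower K L P] (ι : L →ₗ[K] E)

noncomputable def spreadMember (p : ℙ L P) (α : E) : Submodule K (E × P) :=
  LinearMap.range ((α • ι).prod ((LinearMap.toSpanSingleton L P p.rep).restrictScalars K))

variable {ι}

theorem mem_spreadMember {p : ℙ L P} {α : E} {z : E × P} :
    z ∈ spreadMember ι p α ↔ ∃ c : L, (α * ι c, c • p.rep) = z :=
  Iff.rfl

theorem finrank_spreadMember (p : ℙ L P) (α : E) :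
    finrank K (spreadMember ι p α) = finrank K L := by
  refine LinearMap.finrank_range_of_inj fun c c' h => ?_
  exact smul_left_injective L p.rep_nonzero (congrArg Prod.snd h)

theorem spreadMember_inf_fst (p : ℙ L P) (α : E) :
    spreadMember ι p α ⊓ Submodule.fst K E P = ⊥ := by
  refine eq_bot_iff.2 fun z ⟨hz, hz_fst⟩ => ?_
  obtain ⟨c, rfl⟩ := mem_spreadMember.1 hz
  have hc : c = 0 := (smul_eq_zero.1 hz_fst).resolve_right p.rep_nonzero
  simp [hc]

theorem exists_mem_spreadMember (hι : Injective ι) {z : E × P} (hz : z.2 ≠ 0) :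
    ∃ p α, z ∈ spreadMember ι p α := by
  obtain ⟨a, ha⟩ := Projectivization.exists_smul_eq_mk_rep L z.2 hz
  have hrep : ((a⁻¹ : Lˣ) : L) • (Projectivization.mk L z.2 hz).rep = z.2 := by
    rw [← ha, ← Units.smul_def, inv_smul_smul]
  have hι0 : ι ((a⁻¹ : Lˣ) : L) ≠ 0 := (map_ne_zero_iff ι hι).2 (Units.ne_zero _)
  refine ⟨Projectivization.mk L z.2 hz, z.1 * (ι ((a⁻¹ : Lˣ) : L))⁻¹,
    mem_spreadMember.2 ⟨(a⁻¹ : Lˣ), ?_⟩⟩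
  rw [inv_mul_cancel_right₀ hι0, hrep]

theorem eq_of_mem_spreadMember (hι : Injective ι) {z : E × P} (hz : z.2 ≠ 0)
    {p p' : ℙ L P} {α α' : E} (h : z ∈ spreadMember ι p α) (h' : z ∈ spreadMember ι p' α') :
    p = p' ∧ α = α' := by
  obtain ⟨c, rfl⟩ := mem_spreadMember.1 h
  obtain ⟨c', hc'⟩ := mem_spreadMember.1 h'
  simp only [Prod.mk.injEq] at hc' hz
  have hp : p' = p := (Projectivization.eq_mk_of_smul_rep_eq hz hc'.2).trans
    (Projectivization.eq_mk_of_smul_rep_eq hz rfl).symm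
  subst hp
  have hc : c' = c := smul_left_injective L p'.rep_nonzero hc'.2
  subst hc
  have hc0 : ι c' ≠ 0 := (map_ne_zero_iff ι hι).2 (smul_ne_zero_iff.1 hz).1
  exact ⟨rfl, (mul_left_injective₀ hc0 hc'.1).symm⟩

theorem spreadMember_injective (hι : Injective ι) :
    Injective fun pa : ℙ L P × E => spreadMember ι pa.1 pa.2 := by
  rintro ⟨p, α⟩ ⟨p', α'⟩ (h : spreadMember ι p α = spreadMember ι p' α')
  have hz : (α * ι 1, (1 : L) • p.rep) ∈ spreadMember ι p α := mem_spreadMember.2 ⟨1, rfl⟩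
  have hz' : (α * ι 1, (1 : L) • p.rep) ∈ spreadMember ι p' α' := h ▸ hz
  obtain ⟨rfl, rfl⟩ :=
    eq_of_mem_spreadMember hι (by simpa using p.rep_nonzero) hz hz'
  rfl

theorem isSpreadOutside_range_spreadMember (hι : Injective ι) :
    IsSpreadOutside (Submodule.fst K E P) (finrank K L)
      (Set.range fun pa : ℙ L P × E => spreadMember ι pa.1 pa.2) := by
  refine ⟨?_, fun v hv hvU => ?_⟩
  · rintro _ ⟨⟨p, α⟩, rfl⟩
    exact ⟨finrank_spreadMember p α, spreadMember_inf_fst p α⟩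
  obtain ⟨z, hzv, hzU⟩ := SetLike.not_le_iff_exists.1 hvU
  have hz : z.2 ≠ 0 := hzU
  have hz0 : z ≠ 0 := ne_of_apply_ne Prod.snd hz
  obtain ⟨p, α, hzW⟩ := exists_mem_spreadMember hι hz
  refine ⟨spreadMember ι p α,
    ⟨⟨(p, α), rfl⟩, (Submodule.le_iff_mem_of_finrank_eq_one hv hzv hz0).2 hzW⟩, ?_⟩
  rintro _ ⟨⟨⟨p', α'⟩, rfl⟩, hvW⟩
  obtain ⟨rfl, rfl⟩ := eq_of_mem_spreadMember hι hz (hvW hzv) hzW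
  rfl

theorem exists_spreadOutside_fst [Finite E] [Finite P] (hι : Injective ι) :
    ∃ S : Finset (Submodule K (E × P)), IsSpreadOutside (Submodule.fst K E P) (finrank K L) S ∧
      S.card * (Nat.card L - 1) = Nat.card E * (Nat.card P - 1) := by
  have hfin := Set.finite_range fun pa : ℙ L P × E => spreadMember ι pa.1 pa.2
  refine ⟨hfin.toFinset, by simpa using isSpreadOutside_range_spreadMember hι, ?_⟩
  rw [← Set.ncard_eq_toFinset_card _ hfin,
    Set.ncard_range_of_injective (spreadMember_injective hι), Nat.card_prod, Projectivization.card L P]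
  ring

end Model

theorem cast_eq_div_of_mul_eq {c q a b k : ℕ} (hq : 1 < q) (hk : k ≠ 0)
    (h : c * (q ^ k - 1) = q ^ a * (q ^ b - 1)) :
    (c : ℝ) = (q : ℝ) ^ a * ((q : ℝ) ^ b - 1) / ((q : ℝ) ^ k - 1) := by
  have hqk : 1 < q ^ k := Nat.one_lt_pow hk hq
  have hqb : 1 ≤ q ^ b := Nat.one_le_pow _ _ (by omega)
  have hqk' : (1 : ℝ) < (q : ℝ) ^ k := by exact_mod_cast hqk
  rw [eq_div_iff (by linarith)]
  have h' := congrArg (Nat.cast : ℕ → ℝ) h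
  push_cast [Nat.cast_sub hqk.le, Nat.cast_sub hqb] at h'
  exact h'

theorem stmt_6_general (q n m k r : ℕ) (K : Type*) [Field K] [Fintype K] (hq : Fintype.card K = q)
    (V : Type*) [AddCommGroup V] [Module K V] [FiniteDimensional K V]
    (hV : Module.finrank K V = n)
    (hn : n = m * k + r) (hr : r < k)
    (U : Submodule K V) (hU : Module.finrank K U = k + r) :
    ∃ S : Finset (Submodule K V),
      (∀ W ∈ S, Module.finrank K W = k ∧ W ⊓ U = ⊥) ∧
      (∀ v : Submodule K V, Module.finrank K v = 1 → ¬ v ≤ U → ∃! W, W ∈ S ∧ v ≤ W) ∧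
      (S.card : ℝ) = (q : ℝ) ^ (k + r) * ((q : ℝ) ^ (n - k - r) - 1) / ((q : ℝ) ^ k - 1) := by
  classical
  obtain ⟨t, rfl⟩ : ∃ t, m = t + 1 := by
    refine ⟨m - 1, (Nat.succ_pred_eq_of_ne_zero fun hm => ?_).symm⟩
    have := Submodule.finrank_le U
    simp only [hm, zero_mul, zero_add] at hn
    omega
  have : Fact (ringChar K).Prime := ⟨CharP.char_is_prime K _⟩
  have : NeZero k := ⟨by omega⟩
  let L := FiniteField.Extension K (ringChar K) k
  let E := FiniteField.Extension K (ringChar K) (k + r)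
  have hL : finrank K L = k := FiniteField.finrank_extension ..
  have hE : finrank K E = k + r := FiniteField.finrank_extension ..
  have hP : finrank K (Fin t → L) = t * k := by
    rw [Module.finrank_pi_fintype]
    simp [hL]
  obtain ⟨ι, hι⟩ := finrank_le_iff_exists_linearMap.1 (show finrank K L ≤ finrank K E by omega)
  obtain ⟨e, he⟩ := exists_linearEquiv_prod_map_fst (P := Fin t → L) U (hE.trans hU.symm)
    (by rw [hE, hP, hV, hn]; ring)
  obtain ⟨S, hS, hcard⟩ := exists_spreadOutside_fst (P := Fin t → L) hι
  have hSV := hS.map_equiv e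
  rw [he, hL, ← Finset.coe_image] at hSV
  refine ⟨_, hSV.1, hSV.2, ?_⟩
  rw [Finset.card_image_of_injective _ (Submodule.map_injective_of_injective e.injective)]
  refine cast_eq_div_of_mul_eq (hq ▸ Fintype.one_lt_card) (NeZero.ne k) ?_
  rw [Nat.card_fun, Nat.card_fin, FiniteField.natCard_extension, FiniteField.natCard_extension,
    Nat.card_eq_fintype_card, hq, ← pow_mul] at hcard
  rwa [show n - k - r = k * t by rw [hn, add_mul, one_mul, mul_comm t k]; omega]

theorem stmt_6 (q n m k r : ℕ) (K : Type*) [Field K] [Fintype K] (hq : Fintype.card K = q)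
    (V : Type*) [AddCommGroup V] [Module K V] [FiniteDimensional K V]
    (hV : Module.finrank K V = n)
    (hn : n = m * k + r) (hm : 2 ≤ m) (hr : r < k)
    (U : Submodule K V) (hU : Module.finrank K U = k + r) :
    ∃ S : Finset (Submodule K V),
      (∀ W ∈ S, Module.finrank K W = k ∧ W ⊓ U = ⊥) ∧
      (∀ v : Submodule K V, Module.finrank K v = 1 → ¬ v ≤ U → ∃! W, W ∈ S ∧ v ≤ W) ∧
      (S.card : ℝ) = (q : ℝ) ^ (k + r) * ((q : ℝ) ^ (n - k - r) - 1) / ((q : ℝ) ^ k - 1) :=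
  stmt_6_general q n m k r K hq V hV hn hr U hU
end

section
/- Let W be an (s+t)-dimensional vector space over F_q with s ≥ t ≥ 1, and let U be an s-dimensional subspace of W. Then there exists a family S of t-dimensional subspaces of W, each having trivial intersection with U, such that every 1-dimensional subspace of W not contained in U is contained in exactly one element of S. -/
/-!
Beutelspacher's construction. Split `W = C ⊕ U` and identify `U` with the field `L = 𝔽_{q^s}`;
since `t ≤ s`, `C` embeds `K`-linearly into `L`. For `a ∈ L` the graph `X_a = {c + a c : c ∈ C}` is
a `t`-space meeting `U` trivially, and a point `⟨c + u⟩` with `c ≠ 0` lies on `X_a` exactly when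
`a c = u`, i.e. for the single value `a = u c⁻¹`.
-/

open Module

namespace LinearMap

variable {R W : Type*} [Ring R] [AddCommGroup W] [Module R W] {U C : Submodule R W}

def graphIn (f : C →ₗ[R] U) : Submodule R W :=
  range (C.subtype + U.subtype ∘ₗ f)

theorem add_mem_graphIn_iff (hUC : Disjoint U C) (f : C →ₗ[R] U) (c : C) (u : U) :
    (c + u : W) ∈ f.graphIn ↔ f c = u := by
  refine ⟨fun ⟨x, hx⟩ ↦ ?_, fun h ↦ ⟨c, by simp [h]⟩⟩
  have hxc : (x : W) - c = u - f x := by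
    simp only [add_apply, Submodule.coe_subtype, coe_comp, Function.comp_apply] at hx
    rw [sub_eq_sub_iff_add_eq_add, hx, add_comm]
  have hx0 : (x : W) - c = 0 :=
    Submodule.disjoint_def.mp hUC _ (hxc ▸ U.sub_mem u.2 (f x).2) (C.sub_mem x.2 c.2)
  obtain rfl : x = c := Subtype.ext (sub_eq_zero.mp hx0)
  exact Subtype.ext (sub_eq_zero.mp (hxc ▸ hx0)).symm

theorem graphIn_inf_eq_bot (hUC : Disjoint U C) (f : C →ₗ[R] U) : f.graphIn ⊓ U = ⊥ := by
  refine eq_bot_iff.mpr fun w ⟨hwf, hwU⟩ ↦ ?_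
  have h := (add_mem_graphIn_iff hUC f 0 ⟨w, hwU⟩).mp (by simpa using hwf)
  simpa using congrArg Subtype.val h.symm

theorem finrank_graphIn [StrongRankCondition R] [Module.Finite R C] (hUC : Disjoint U C)
    (f : C →ₗ[R] U) : finrank R f.graphIn = finrank R C := by
  refine finrank_range_of_inj <| (injective_iff_map_eq_zero _).mpr fun x hx ↦ Subtype.ext ?_
  have hxU : (x : W) = -f x := eq_neg_of_add_eq_zero_left hx
  exact Submodule.disjoint_def.mp hUC _ (hxU ▸ U.neg_mem (f x).2) x.2

end LinearMap

theorem Submodule.eq_span_singleton_of_finrank_eq_one {K V : Type*} [DivisionRing K]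
    [AddCommGroup V] [Module K V] {v : Submodule K V} (hv : finrank K v = 1) {w : V}
    (hwv : w ∈ v) (hw : w ≠ 0) : v = K ∙ w := by
  have : FiniteDimensional K v := Module.finite_of_finrank_eq_succ hv
  exact (Submodule.eq_of_le_of_finrank_le ((Submodule.span_singleton_le_iff_mem w v).mpr hwv)
    (by rw [hv, finrank_span_singleton hw])).symm

section PartialSpread

variable {K W A : Type*} [DivisionRing K] [AddCommGroup W] [Module K W] {U C : Submodule K W}

theorem existsUnique_mem_graphIn (hUC : IsCompl U C) {f : A → C →ₗ[K] U}
    (hf : ∀ c : C, c ≠ 0 → Function.Bijective fun a ↦ f a c) {w : W} (hw : w ∉ U) :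
    ∃! a, w ∈ (f a).graphIn := by
  obtain ⟨u, c, rfl, -⟩ := Submodule.existsUnique_add_of_isCompl hUC w
  have hc : c ≠ 0 := by rintro rfl; simp at hw
  rw [add_comm]
  simpa only [LinearMap.add_mem_graphIn_iff hUC.disjoint] using (hf c hc).existsUnique u

theorem exists_partialSpread_of_bijective [Finite A] [FiniteDimensional K W] (hUC : IsCompl U C)
    (f : A → C →ₗ[K] U) (hf : ∀ c : C, c ≠ 0 → Function.Bijective fun a ↦ f a c) :
    ∃ S : Finset (Submodule K W),
      (∀ X ∈ S, finrank K X = finrank K C ∧ X ⊓ U = ⊥) ∧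
      (∀ v : Submodule K W, finrank K v = 1 → ¬ v ≤ U → ∃! X, X ∈ S ∧ v ≤ X) := by
  classical
  have := Fintype.ofFinite A
  refine ⟨Finset.univ.image fun a ↦ (f a).graphIn, ?_, fun v hv hvU ↦ ?_⟩
  · simp only [Finset.mem_image, Finset.mem_univ, true_and, forall_exists_index,
      forall_apply_eq_imp_iff]
    exact fun a ↦ ⟨(f a).finrank_graphIn hUC.disjoint, (f a).graphIn_inf_eq_bot hUC.disjoint⟩
  obtain ⟨w, hwv, hwU⟩ := SetLike.not_le_iff_exists.mp hvU
  obtain ⟨a, ha, huniq⟩ := existsUnique_mem_graphIn hUC hf hwU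
  rw [v.eq_span_singleton_of_finrank_eq_one hv hwv (by rintro rfl; exact hwU U.zero_mem)]
  simp only [Submodule.span_singleton_le_iff_mem, Finset.mem_image, Finset.mem_univ, true_and]
  refine ⟨_, ⟨⟨a, rfl⟩, ha⟩, ?_⟩
  rintro _ ⟨⟨b, rfl⟩, hb⟩
  rw [huniq b hb]

end PartialSpread

theorem exists_family_bijective_apply {K W L : Type*} [Field K] [AddCommGroup W] [Module K W]
    [DivisionRing L] [Algebra K L] [FiniteDimensional K L] {U C : Submodule K W}
    [FiniteDimensional K U] [FiniteDimensional K C]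
    (hU : finrank K U = finrank K L) (hC : finrank K C ≤ finrank K L) :
    ∃ f : L → C →ₗ[K] U, ∀ c : C, c ≠ 0 → Function.Bijective fun a ↦ f a c := by
  let ψ : U ≃ₗ[K] L := .ofFinrankEq U L hU
  obtain ⟨ι, hι⟩ := finrank_le_iff_exists_linearMap.mp hC
  refine ⟨fun a ↦ ψ.symm.toLinearMap ∘ₗ LinearMap.mulLeft K a ∘ₗ ι, fun c hc ↦ ?_⟩
  have hιc : ι c ≠ 0 := (map_ne_zero_iff ι hι).mpr hc
  exact ψ.symm.bijective.comp (mulRight_bijective₀ _ hιc)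

theorem stmt_7_general (s t : ℕ) (K : Type*) [Field K] [Fintype K]
    (W : Type*) [AddCommGroup W] [Module K W] [FiniteDimensional K W]
    (hW : Module.finrank K W = s + t) (ht : 1 ≤ t) (hst : t ≤ s)
    (U : Submodule K W) (hU : Module.finrank K U = s) :
    ∃ S : Finset (Submodule K W),
      (∀ X ∈ S, Module.finrank K X = t ∧ X ⊓ U = ⊥) ∧
      (∀ v : Submodule K W, Module.finrank K v = 1 → ¬ v ≤ U → ∃! X, X ∈ S ∧ v ≤ X) := by
  obtain ⟨C, hUC⟩ := U.exists_isCompl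
  have hC : finrank K C = t := by
    have := Submodule.finrank_add_eq_of_isCompl hUC
    omega
  have : NeZero s := ⟨by omega⟩
  have : Fact (ringChar K).Prime := ⟨CharP.char_is_prime K _⟩
  have hL := FiniteField.finrank_extension K (ringChar K) s
  obtain ⟨f, hf⟩ := exists_family_bijective_apply (U := U) (C := C) (hU.trans hL.symm)
    (hC.trans_le (hst.trans_eq hL.symm))
  simpa only [hC] using exists_partialSpread_of_bijective hUC f hf

theorem stmt_7 (q s t : ℕ) (K : Type*) [Field K] [Fintype K] (hq : Fintype.card K = q)
    (W : Type*) [AddCommGroup W] [Module K W] [FiniteDimensional K W]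
    (hW : Module.finrank K W = s + t) (ht : 1 ≤ t) (hst : t ≤ s)
    (U : Submodule K W) (hU : Module.finrank K U = s) :
    ∃ S : Finset (Submodule K W),
      (∀ X ∈ S, Module.finrank K X = t ∧ X ⊓ U = ⊥) ∧
      (∀ v : Submodule K W, Module.finrank K v = 1 → ¬ v ≤ U → ∃! X, X ∈ S ∧ v ≤ X) :=
  stmt_7_general s t K W hW ht hst U hU
end

section
/- Let V be an n-dimensional vector space over F_q with k | n, where n ≥ 2k. Then V admits a k-spread: a family of k-dimensional subspaces such that every 1-dimensional subspace of V is contained in exactly one member of the family. -/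
/-!
Let `L` be the extension of `K = 𝔽_q` of degree `k`. Since `k ∣ n`, `V` is `K`-isomorphic to
`L^(n/k)`, and the `L`-lines of `L^(n/k)` are `k`-dimensional `K`-subspaces. Every nonzero vector `x`
lies in exactly one of them, namely `L ∙ x`, so they form a `k`-spread.
-/

open Module

def Submodule.IsSpread {K V : Type*} [Field K] [AddCommGroup V] [Module K V]
    (S : Set (Submodule K V)) (k : ℕ) : Prop :=
  (∀ W ∈ S, finrank K W = k) ∧ ∀ v : Submodule K V, finrank K v = 1 → ∃! W, W ∈ S ∧ v ≤ W

namespace Submodule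

section Transport

variable {K M V : Type*} [Field K] [AddCommGroup M] [Module K M] [AddCommGroup V] [Module K V]

theorem IsSpread.map_equiv {S : Set (Submodule K M)} {k : ℕ} (hS : IsSpread S k)
    (e : M ≃ₗ[K] V) : IsSpread (map (e : M →ₗ[K] V) '' S) k := by
  have le_map_iff (v : Submodule K V) (W : Submodule K M) :
      v ≤ W.map (e : M →ₗ[K] V) ↔ v.map (e.symm : V →ₗ[K] M) ≤ W := by
    rw [map_equiv_eq_comap_symm, map_le_iff_le_comap]
  refine ⟨?_, fun v hv ↦ ?_⟩
  · rintro _ ⟨W, hW, rfl⟩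
    rw [LinearEquiv.finrank_map_eq, hS.1 W hW]
  · obtain ⟨W, ⟨hWS, hvW⟩, hW⟩ := hS.2 (v.map (e.symm : V →ₗ[K] M))
      (by rw [LinearEquiv.finrank_map_eq, hv])
    refine ⟨W.map (e : M →ₗ[K] V), ⟨⟨W, hWS, rfl⟩, (le_map_iff v W).2 hvW⟩, ?_⟩
    rintro _ ⟨⟨W', hW'S, rfl⟩, hvW'⟩
    rw [hW W' ⟨hW'S, (le_map_iff v W').1 hvW'⟩]

end Transport

section RestrictScalars

variable (K L M : Type*) [Field K] [Field L] [Algebra K L] [AddCommGroup M] [Module L M]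
  [Module K M] [IsScalarTower K L M]

theorem finrank_restrictScalars_of_finrank_eq_one {U : Submodule L M} (hU : finrank L U = 1) :
    finrank K (U.restrictScalars K) = finrank K L := by
  calc finrank K (U.restrictScalars K) = finrank K U :=
        ((restrictScalarsEquiv K L M U).restrictScalars K).finrank_eq
    _ = finrank K L := by rw [← finrank_mul_finrank K L U, hU, mul_one]

variable {K L M} in
theorem existsUnique_finrank_eq_one_le_restrictScalars {v : Submodule K M}
    (hv : finrank K v = 1) :
    ∃! U : Submodule L M, finrank L U = 1 ∧ v ≤ U.restrictScalars K := by
  obtain ⟨x, hxv, hx0⟩ := exists_mem_ne_zero_of_ne_bot (p := v) (by rintro rfl; simp at hv)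
  refine ⟨L ∙ x, ⟨finrank_span_singleton hx0, ?_⟩, fun U ⟨hU, hvU⟩ ↦ ?_⟩
  · rw [eq_span_singleton_of_mem_of_finrank_eq_one hv hxv hx0, span_le,
      Set.singleton_subset_iff]
    exact mem_span_singleton_self x
  · exact eq_span_singleton_of_mem_of_finrank_eq_one hU (hvU hxv) hx0

theorem isSpread_restrictScalars_lines :
    IsSpread {W : Submodule K M | ∃ U : Submodule L M, finrank L U = 1 ∧ U.restrictScalars K = W}
      (finrank K L) := by
  refine ⟨?_, fun v hv ↦ ?_⟩
  · rintro _ ⟨U, hU, rfl⟩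
    exact finrank_restrictScalars_of_finrank_eq_one K L M hU
  · obtain ⟨U, ⟨hU, hvU⟩, huniq⟩ := existsUnique_finrank_eq_one_le_restrictScalars (L := L) hv
    refine ⟨U.restrictScalars K, ⟨⟨U, hU, rfl⟩, hvU⟩, ?_⟩
    rintro _ ⟨⟨U', hU', rfl⟩, hvU'⟩
    rw [huniq U' ⟨hU', hvU'⟩]

end RestrictScalars

end Submodule

theorem stmt_8_general (n k : ℕ) (K : Type*) [Field K] [Fintype K]
    (V : Type*) [AddCommGroup V] [Module K V] [FiniteDimensional K V]
    (hV : Module.finrank K V = n)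
    (hk : 0 < k) (hdvd : k ∣ n) :
    ∃ S : Finset (Submodule K V),
      (∀ W ∈ S, Module.finrank K W = k) ∧
      (∀ v : Submodule K V, Module.finrank K v = 1 → ∃! W, W ∈ S ∧ v ≤ W) := by
  obtain ⟨p, _⟩ := CharP.exists K
  have : Fact p.Prime := ⟨CharP.char_is_prime K p⟩
  have : NeZero k := ⟨hk.ne'⟩
  let L := FiniteField.Extension K p k
  obtain ⟨m, rfl⟩ := hdvd
  let e : (Fin m → L) ≃ₗ[K] V := LinearEquiv.ofFinrankEq _ _ <| by
    rw [← finrank_mul_finrank K L, FiniteField.finrank_extension, finrank_fin_fun, hV]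
  have hS := (Submodule.isSpread_restrictScalars_lines K L (Fin m → L)).map_equiv e
  rw [FiniteField.finrank_extension] at hS
  have : Finite V := Module.finite_of_finite K
  exact ⟨(Set.toFinite _).toFinset,
    by simpa only [Set.Finite.mem_toFinset, Submodule.IsSpread] using hS⟩

theorem stmt_8 (q n k : ℕ) (K : Type*) [Field K] [Fintype K] (hq : Fintype.card K = q)
    (V : Type*) [AddCommGroup V] [Module K V] [FiniteDimensional K V]
    (hV : Module.finrank K V = n)
    (hk : 0 < k) (hdvd : k ∣ n) (hn : 2 * k ≤ n) :
    ∃ S : Finset (Submodule K V),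
      (∀ W ∈ S, Module.finrank K W = k) ∧
      (∀ v : Submodule K V, Module.finrank K v = 1 → ∃! W, W ∈ S ∧ v ≤ W) :=
  stmt_8_general n k K V hV hk hdvd
end

section
/- Let V be an n-dimensional vector space over F_q and f a real-valued weighting of the 1-dimensional subspaces of V with total sum zero. Define the weight of a subspace as the sum of weights of 1-dimensional subspaces it contains. If a k-dimensional subspace T has negative weight and 0 ≤ i ≤ n-k-1, then there exists a (k+i)-dimensional subspace W containing T with negative weight. -/
/-- The weight of a subspace `S`: the sum of the weights of the 1-dimensional
subspaces contained in `S`. -/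
noncomputable def subspaceWeight {K V : Type*} [Field K] [AddCommGroup V] [Module K V]
    (f : Submodule K V → ℝ) (S : Submodule K V) : ℝ :=
  ∑ᶠ v ∈ {v : Submodule K V | Module.finrank K v = 1 ∧ v ≤ S}, f v

open Module Finset

lemma subspace_step {K V : Type*} [Field K] [Fintype K] [AddCommGroup V] [Module K V]
    [FiniteDimensional K V]
    (f : Submodule K V → ℝ)
    (hsum : ∑ᶠ v ∈ {v : Submodule K V | Module.finrank K v = 1}, f v = 0)
    (W : Submodule K V) (d : ℕ) (hW : Module.finrank K W = d)
    (hd : d + 2 ≤ Module.finrank K V)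
    (hneg : subspaceWeight f W < 0) :
    ∃ W' : Submodule K V, W ≤ W' ∧ Module.finrank K W' = d + 1 ∧ subspaceWeight f W' < 0 := by
  classical
  haveI : Finite V := Module.finite_of_finite K
  haveI : Fintype (Submodule K V) := Fintype.ofFinite _
  set L : Finset (Submodule K V) := univ.filter (fun v => Module.finrank K v = 1) with hL
  have hweight : ∀ S : Submodule K V,
      subspaceWeight f S = ∑ ℓ ∈ L.filter (fun ℓ => ℓ ≤ S), f ℓ := by
    intro S
    rw [subspaceWeight, ← finsum_mem_coe_finset]
    congr 1
    ext v
    simp [hL, and_assoc]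
  have hsum' : ∑ ℓ ∈ L, f ℓ = 0 := by
    rw [← finsum_mem_coe_finset]
    convert hsum using 2
    ext v
    simp [hL]
  -- key dimension fact for sups with lines not inside W
  have hsupdim : ∀ ℓ : Submodule K V, Module.finrank K ℓ = 1 → ¬ ℓ ≤ W →
      Module.finrank K ↥(W ⊔ ℓ) = d + 1 := by
    intro ℓ hℓ1 hℓW
    have hinf : W ⊓ ℓ = ⊥ := by
      by_contra h
      have h1 : Module.finrank K ℓ ≤ Module.finrank K ↥(W ⊓ ℓ) := by
        rw [hℓ1]
        have : Module.finrank K ↥(W ⊓ ℓ) ≠ 0 := fun h0 => h (Submodule.finrank_eq_zero.mp h0)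
        omega
      have := Submodule.eq_of_le_of_finrank_le (inf_le_right : W ⊓ ℓ ≤ ℓ) h1
      exact hℓW (this ▸ (inf_le_left : W ⊓ ℓ ≤ W))
    have := Submodule.finrank_sup_add_finrank_inf_eq W ℓ
    rw [hinf, hW, hℓ1] at this
    simpa using this
  set A : Finset (Submodule K V) :=
    univ.filter (fun W' => Module.finrank K W' = d + 1 ∧ W ≤ W') with hA
  have hmemA : ∀ W' : Submodule K V, W' ∈ A ↔ Module.finrank K W' = d + 1 ∧ W ≤ W' := by
    intro W'; simp [hA]
  -- counting: lines inside W
  have hcount1 : ∀ ℓ : Submodule K V, ℓ ≤ W →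
      A.filter (fun W' => ℓ ≤ W') = A := by
    intro ℓ hℓ
    apply Finset.filter_true_of_mem
    intro W' hW'
    exact le_trans hℓ ((hmemA W').mp hW').2
  -- counting: lines not inside W
  have hcount2 : ∀ ℓ : Submodule K V, Module.finrank K ℓ = 1 → ¬ ℓ ≤ W →
      A.filter (fun W' => ℓ ≤ W') = {W ⊔ ℓ} := by
    intro ℓ hℓ1 hℓW
    ext W'
    simp only [Finset.mem_filter, Finset.mem_singleton, hmemA]
    constructor
    · rintro ⟨⟨hr, hWle⟩, hℓle⟩
      have hsup : W ⊔ ℓ ≤ W' := sup_le hWle hℓle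
      exact ((Submodule.eq_of_le_of_finrank_le hsup (by rw [hr, hsupdim ℓ hℓ1 hℓW]))).symm
    · rintro rfl
      exact ⟨⟨hsupdim ℓ hℓ1 hℓW, le_sup_left⟩, le_sup_right⟩
  -- the double counting identity
  have key : ∑ W' ∈ A, subspaceWeight f W' = ((A.card : ℝ) - 1) * subspaceWeight f W := by
    have step1 : ∑ W' ∈ A, subspaceWeight f W'
        = ∑ ℓ ∈ L, ((A.filter (fun W' => ℓ ≤ W')).card : ℝ) * f ℓ := by
      calc ∑ W' ∈ A, subspaceWeight f W'
          = ∑ W' ∈ A, ∑ ℓ ∈ L, if ℓ ≤ W' then f ℓ else 0 := by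
            simp_rw [hweight, Finset.sum_filter]
        _ = ∑ ℓ ∈ L, ∑ W' ∈ A, if ℓ ≤ W' then f ℓ else 0 := Finset.sum_comm
        _ = ∑ ℓ ∈ L, ((A.filter (fun W' => ℓ ≤ W')).card : ℝ) * f ℓ := by
            refine Finset.sum_congr rfl fun ℓ _ => ?_
            rw [← Finset.sum_filter, Finset.sum_const, nsmul_eq_mul]
    rw [step1, ← Finset.sum_filter_add_sum_filter_not L (fun ℓ => ℓ ≤ W)]
    have e1 : ∑ ℓ ∈ L.filter (fun ℓ => ℓ ≤ W),
        ((A.filter (fun W' => ℓ ≤ W')).card : ℝ) * f ℓ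
        = (A.card : ℝ) * subspaceWeight f W := by
      rw [hweight W, Finset.mul_sum]
      refine Finset.sum_congr rfl fun ℓ hℓ => ?_
      rw [hcount1 ℓ (Finset.mem_filter.mp hℓ).2]
    have e2 : ∑ ℓ ∈ L.filter (fun ℓ => ¬ ℓ ≤ W),
        ((A.filter (fun W' => ℓ ≤ W')).card : ℝ) * f ℓ
        = - subspaceWeight f W := by
      have : ∀ ℓ ∈ L.filter (fun ℓ => ¬ ℓ ≤ W),
          ((A.filter (fun W' => ℓ ≤ W')).card : ℝ) * f ℓ = f ℓ := by
        intro ℓ hℓ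
        obtain ⟨hℓL, hℓW⟩ := Finset.mem_filter.mp hℓ
        have hℓ1 : Module.finrank K ℓ = 1 := by simpa [hL] using hℓL
        rw [hcount2 ℓ hℓ1 hℓW]
        simp
      rw [Finset.sum_congr rfl this]
      have := Finset.sum_filter_add_sum_filter_not L (fun ℓ => ℓ ≤ W) f
      rw [hsum'] at this
      rw [hweight W]
      linarith only [this]
    rw [e1, e2]
    ring
  -- A has at least two elements
  have hWtop : W < ⊤ := by
    refine lt_top_iff_ne_top.mpr fun h => ?_
    rw [h, finrank_top] at hW
    omega
  obtain ⟨v, -, hv⟩ := SetLike.exists_of_lt hWtop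
  have hv0 : v ≠ 0 := fun h => hv (h ▸ W.zero_mem)
  have hvW : ¬ Submodule.span K {v} ≤ W := fun h =>
    hv (h (Submodule.mem_span_singleton_self v))
  set W1 := W ⊔ Submodule.span K {v} with hW1
  have hW1d : Module.finrank K W1 = d + 1 := hsupdim _ (finrank_span_singleton hv0) hvW
  have hW1top : W1 < ⊤ := by
    refine lt_top_iff_ne_top.mpr fun h => ?_
    rw [h, finrank_top] at hW1d
    omega
  obtain ⟨u, -, hu⟩ := SetLike.exists_of_lt hW1top
  have huW : u ∉ W := fun h => hu (le_sup_left (α := Submodule K V) h)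
  have hu0 : u ≠ 0 := fun h => huW (h ▸ W.zero_mem)
  have huWs : ¬ Submodule.span K {u} ≤ W := fun h =>
    huW (h (Submodule.mem_span_singleton_self u))
  set W2 := W ⊔ Submodule.span K {u} with hW2
  have hW2d : Module.finrank K W2 = d + 1 := hsupdim _ (finrank_span_singleton hu0) huWs
  have hne : W1 ≠ W2 := by
    intro h
    exact hu (h ▸ (le_sup_right (a := W) (Submodule.mem_span_singleton_self u)))
  have hcard : 2 ≤ A.card := by
    apply Finset.one_lt_card.mpr
    exact ⟨W1, (hmemA W1).mpr ⟨hW1d, le_sup_left⟩, W2, (hmemA W2).mpr ⟨hW2d, le_sup_left⟩, hne⟩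
  have hsumneg : ∑ W' ∈ A, subspaceWeight f W' < 0 := by
    rw [key]
    have h1 : (1 : ℝ) ≤ (A.card : ℝ) - 1 := by
      have : (2 : ℝ) ≤ (A.card : ℝ) := by exact_mod_cast hcard
      linarith only [this]
    exact mul_neg_of_pos_of_neg (by linarith only [h1]) hneg
  by_contra hcon
  push_neg at hcon
  have : (0 : ℝ) ≤ ∑ W' ∈ A, subspaceWeight f W' := by
    apply Finset.sum_nonneg
    intro W' hW'
    obtain ⟨hr, hle⟩ := (hmemA W').mp hW'
    exact hcon W' hle hr
  linarith only [this, hsumneg]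

theorem stmt_9 (q n k : ℕ) (K : Type*) [Field K] [Fintype K] (hq : Fintype.card K = q)
    (V : Type*) [AddCommGroup V] [Module K V] [FiniteDimensional K V]
    (hV : Module.finrank K V = n)
    (f : Submodule K V → ℝ)
    (hsum : ∑ᶠ v ∈ {v : Submodule K V | Module.finrank K v = 1}, f v = 0)
    (T : Submodule K V) (hT : Module.finrank K T = k) (hneg : subspaceWeight f T < 0)
    (i : ℕ) (hi : i ≤ n - k - 1) :
    ∃ W : Submodule K V, T ≤ W ∧ Module.finrank K W = k + i ∧ subspaceWeight f W < 0 := by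
  induction i with
  | zero => exact ⟨T, le_refl T, by simpa using hT, hneg⟩
  | succ j ih =>
    obtain ⟨W, hTW, hWd, hWneg⟩ := ih (Nat.le_of_succ_le hi)
    have hd : (k + j) + 2 ≤ Module.finrank K V := by rw [hV]; omega
    obtain ⟨W', hWW', hW'd, hW'neg⟩ := subspace_step f hsum W (k + j) hWd hd hWneg
    exact ⟨W', le_trans hTW hWW', by omega, hW'neg⟩
end

section
/- Let x_1 ≥ ... ≥ x_n be reals summing to zero with n ≥ 2k, and set A = {1,...,k}, b_A = ∑_{i=1}^k x_i. Then ∑ over k-element subsets S with |S ∩ A| = 1 of b_S equals (C(n-k-1,k-1) - (k-1)·C(n-k-1,k-2))·b_A, where b_S = ∑_{i∈S} x_i. -/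
/-!
A `k`-set meeting `A = {0, …, k-1}` in exactly one point is `insert a T` with `a ∈ A` and `T` a
`(k-1)`-subset of `B = {k, …, n-1}`. Summing over these pairs, each `x a` with `a ∈ A` is counted
`C(|B|, k-1)` times and each `x b` with `b ∈ B` is counted `k · C(|B|-1, k-2)` times. Since
`b_B = -b_A`, Pascal's rule turns `C(|B|, k-1) - k · C(|B|-1, k-2)` into the stated coefficient.
-/

open Finset

namespace Finset

variable {α M : Type*} [DecidableEq α] [AddCommMonoid M]

theorem sum_powersetCard_sum (s : Finset α) {n : ℕ} (hn : 1 ≤ n) (f : α → M) :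
    ∑ T ∈ s.powersetCard n, ∑ i ∈ T, f i = (#s - 1).choose (n - 1) • ∑ i ∈ s, f i := by
  rw [sum_comm' (t' := s) (s' := fun i ↦ {T ∈ s.powersetCard n | {i} ⊆ T}), smul_sum]
  · refine sum_congr rfl fun i hi ↦ ?_
    rw [sum_const, card_filter_powersetCard_subset _ _ _ (singleton_subset_iff.2 hi)
      (by simpa), card_singleton]
  · intro T i
    simp only [mem_filter, mem_powersetCard, singleton_subset_iff]
    grind

theorem insert_inter_of_mem_of_disjoint {A T : Finset α} {a : α} (ha : a ∈ A)
    (hT : Disjoint T A) :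
    insert a T ∩ A = {a} := by
  rw [insert_inter_of_mem ha, disjoint_iff_inter_eq_empty.1 hT, insert_empty]

theorem insert_sdiff_of_mem_of_disjoint {A T : Finset α} {a : α} (ha : a ∈ A)
    (hT : Disjoint T A) :
    insert a T \ A = T := by
  rw [insert_sdiff_of_mem _ ha, sdiff_eq_self_of_disjoint hT]

theorem sum_powersetCard_filter_card_inter_eq_one {A B : Finset α} (hAB : Disjoint A B) (m : ℕ)
    (g : Finset α → M) :
    ∑ S ∈ (A ∪ B).powersetCard (m + 1) with #(S ∩ A) = 1, g S
      = ∑ a ∈ A, ∑ T ∈ B.powersetCard m, g (insert a T) := by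
  rw [← sum_product']
  refine (sum_nbij (fun p : α × Finset α ↦ insert p.1 p.2) ?_ ?_ ?_ fun _ _ ↦ rfl).symm
  · rintro ⟨a, T⟩ h
    simp only [mem_product, mem_powersetCard] at h
    obtain ⟨ha, hTB, rfl⟩ := h
    have haT : a ∉ T := fun h ↦ disjoint_left.1 hAB ha (hTB h)
    simp only [mem_filter, mem_powersetCard]
    refine ⟨⟨insert_subset (mem_union_left _ ha) (hTB.trans subset_union_right),
      card_insert_of_notMem haT⟩, ?_⟩
    rw [insert_inter_of_mem_of_disjoint ha (hAB.mono_right hTB).symm, card_singleton]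
  · rintro ⟨a, T⟩ h ⟨a', T'⟩ h' he
    simp only [coe_product, Set.mem_prod, mem_coe, mem_powersetCard] at h h'
    obtain ⟨ha, hTB, -⟩ := h
    obtain ⟨ha', hT'B, -⟩ := h'
    have hTA := (hAB.mono_right hTB).symm
    have hT'A := (hAB.mono_right hT'B).symm
    have hpoint : ({a} : Finset α) = {a'} := by
      rw [← insert_inter_of_mem_of_disjoint ha hTA, ← insert_inter_of_mem_of_disjoint ha' hT'A]
      exact congrArg (· ∩ A) he
    have hrest : T = T' := by
      rw [← insert_sdiff_of_mem_of_disjoint ha hTA, ← insert_sdiff_of_mem_of_disjoint ha' hT'A]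
      exact congrArg (· \ A) he
    rw [singleton_inj.1 hpoint, hrest]
  · rintro S hS
    simp only [coe_filter, mem_powersetCard, Set.mem_ofPred_eq] at hS
    obtain ⟨⟨hSAB, hcard⟩, hone⟩ := hS
    obtain ⟨a, ha⟩ := card_eq_one.1 hone
    have haSA : a ∈ S ∩ A := ha ▸ mem_singleton_self a
    refine ⟨(a, S \ A), ?_, ?_⟩
    · simp only [coe_product, Set.mem_prod, mem_coe, mem_powersetCard]
      refine ⟨(mem_inter.1 haSA).2, ?_, ?_⟩
      · exact sdiff_le_iff.2 hSAB
      · have := card_sdiff_add_card_inter S A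
        omega
    · show insert a (S \ A) = S
      rw [insert_eq, ← ha]
      exact sup_inf_sdiff S A

theorem sum_powersetCard_filter_card_inter_eq_one_sum {A B : Finset α} (hAB : Disjoint A B)
    (m : ℕ) (f : α → M) :
    ∑ S ∈ (A ∪ B).powersetCard (m + 1) with #(S ∩ A) = 1, ∑ i ∈ S, f i
      = (#B).choose m • ∑ i ∈ A, f i + #A • ∑ T ∈ B.powersetCard m, ∑ i ∈ T, f i := by
  have hinsert : ∀ a ∈ A, ∀ T ∈ B.powersetCard m, ∑ i ∈ insert a T, f i = f a + ∑ i ∈ T, f i :=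
    fun a ha T hT ↦ sum_insert fun haT ↦ disjoint_left.1 hAB ha ((mem_powersetCard.1 hT).1 haT)
  rw [sum_powersetCard_filter_card_inter_eq_one hAB, sum_congr rfl fun a ha ↦
    sum_congr rfl (hinsert a ha), ← card_powersetCard, smul_sum, ← sum_const]
  simp only [sum_add_distrib, sum_const]

end Finset

theorem stmt_13_general (n k : ℕ) (x : ℕ → ℝ)
    (hsum : ∑ i ∈ Finset.range n, x i = 0)
    (hn : 2 * k ≤ n) :
    (∑ S ∈ ((Finset.range n).powersetCard k).filter
        (fun S => (S ∩ Finset.range k).card = 1), ∑ i ∈ S, x i)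
      = (((n - k - 1).choose (k - 1) : ℝ) - (k - 1 : ℝ) * ((n - k - 1).choose (k - 2) : ℝ))
          * ∑ i ∈ Finset.range k, x i := by
  rcases k with _ | m
  · simp
  have hsplit : range n = range (m + 1) ∪ Ico (m + 1) n := by
    rw [range_eq_Ico, range_eq_Ico, Ico_union_Ico_eq_Ico (Nat.zero_le _) (by omega)]
  have hB : ∑ i ∈ Ico (m + 1) n, x i = -∑ i ∈ range (m + 1), x i := by
    rw [eq_neg_iff_add_eq_zero, add_comm, sum_range_add_sum_Ico _ (by omega), hsum]
  have hdisj : Disjoint (range (m + 1)) (Ico (m + 1) n) := by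
    rw [range_eq_Ico]
    exact Ico_disjoint_Ico_consecutive 0 (m + 1) n
  rw [hsplit, sum_powersetCard_filter_card_inter_eq_one_sum hdisj m, card_range, Nat.card_Ico]
  rcases m with _ | m
  · simp
  rw [sum_powersetCard_sum _ (by omega), hB, Nat.card_Ico]
  obtain ⟨N, hN⟩ : ∃ N, n - (m + 1 + 1) = N + 1 := ⟨n - (m + 2) - 1, by omega⟩
  simp only [hN, Nat.add_sub_cancel, Nat.choose_succ_succ', smul_neg, nsmul_eq_mul]
  push_cast
  ring

theorem stmt_13 (n k : ℕ) (x : ℕ → ℝ)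
    (hmono : ∀ i j, i ≤ j → j < n → x j ≤ x i)
    (hsum : ∑ i ∈ Finset.range n, x i = 0)
    (hk : 1 ≤ k) (hn : 2 * k ≤ n) :
    (∑ S ∈ ((Finset.range n).powersetCard k).filter
        (fun S => (S ∩ Finset.range k).card = 1), ∑ i ∈ S, x i)
      = (((n - k - 1).choose (k - 1) : ℝ) - (k - 1 : ℝ) * ((n - k - 1).choose (k - 2) : ℝ))
          * ∑ i ∈ Finset.range k, x i :=
  stmt_13_general n k x hsum hn
end

section
/- Let k ≥ 2, n ≥ 2k, and fix the k-element sets A = {1,...,k} and C = {1, k+1,...,2k-1} in {1,...,n}. The number of k-element subsets of {1,...,n} that intersect both A and C but do not contain the element 1 equals (2k-2)·(C(n-2,k-1) - C(n-k-1,k-1)) counted for elements of (A∪C)\{1} plus, for each of the n-2k+1 elements outside A∪C, C(n-2,k-1) - 2C(n-k-1,k-1) + C(n-2k,k-1); specifically, for i ∈ {2,...,2k-1}, the number of k-subsets containing i but not 1 and meeting both A and C is C(n-2,k-1) - C(n-k-1,k-1), and for i ∈ {2k,...,n} it is C(n-2,k-1) - 2C(n-k-1,k-1) + C(n-2k,k-1).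 -/
/-!
The `k`-subsets of `U` that contain `i` and avoid a set `D ∌ i` correspond, by removing `i`, to the
`(k - 1)`-subsets of `U \ insert i D`. Since `0` lies in both `A` and `C`, a set avoiding `0` that
misses `A` (resp. `C`, `A ∪ C`) is just a set avoiding `A` (resp. `C`, `A ∪ C`), so inclusion–exclusion
over "misses `A`" and "misses `C`" writes the count as an alternating sum of four such families.
A family whose avoided set contains `i` is empty, which is what distinguishes `i < 2k - 1` from
`i ≥ 2k - 1`.
-/

open Finset

section
variable {α : Type*}

theorem card_filter_not_and_not (s : Finset α) (p q : α → Prop) [DecidablePred p]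
    [DecidablePred q] :
    (#{x ∈ s | ¬p x ∧ ¬q x} : ℤ) =
      #s - #{x ∈ s | p x} - #{x ∈ s | q x} + #{x ∈ s | p x ∧ q x} := by
  classical
  have hsub : {x ∈ s | p x} ∪ {x ∈ s | q x} ⊆ s :=
    union_subset (filter_subset _ _) (filter_subset _ _)
  have hcompl : {x ∈ s | ¬p x ∧ ¬q x} = s \ ({x ∈ s | p x} ∪ {x ∈ s | q x}) := by
    ext x; simp only [mem_filter, mem_sdiff, mem_union]; tauto
  have hinter : {x ∈ s | p x ∧ q x} = {x ∈ s | p x} ∩ {x ∈ s | q x} := by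
    ext x; simp only [mem_filter, mem_inter]; tauto
  have hunion := card_union_add_card_inter {x ∈ s | p x} {x ∈ s | q x}
  rw [hcompl, hinter, card_sdiff_of_subset hsub, Nat.cast_sub (card_le_card hsub)]
  omega

theorem natCard_subtype_subset_card_eq (U : Finset α) (k : ℕ) (p : Finset α → Prop)
    [DecidablePred p] :
    Nat.card {S : Finset α // S ⊆ U ∧ S.card = k ∧ p S} = #{S ∈ U.powersetCard k | p S} := by
  rw [← Nat.card_eq_finsetCard]
  exact Nat.card_congr <| Equiv.subtypeEquivRight fun S => by
    simp only [mem_filter, mem_powersetCard, and_assoc]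

variable [DecidableEq α]

def throughAvoiding (U : Finset α) (k : ℕ) (i : α) (D : Finset α) : Finset (Finset α) :=
  {S ∈ U.powersetCard k | i ∈ S ∧ Disjoint S D}

variable {U D : Finset α} {k : ℕ} {i : α}

theorem throughAvoiding_eq_empty (h : i ∈ D) : throughAvoiding U k i D = ∅ :=
  filter_false_of_mem fun _ _ ⟨hiS, hSD⟩ => disjoint_left.1 hSD hiS h

theorem filter_disjoint_throughAvoiding (E : Finset α) :
    {S ∈ throughAvoiding U k i D | Disjoint S E} = throughAvoiding U k i (D ∪ E) := by
  ext S
  simp only [throughAvoiding, mem_filter, disjoint_union_right, and_assoc]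

theorem card_throughAvoiding (hiU : i ∈ U) (hiD : i ∉ D) :
    #(throughAvoiding U (k + 1) i D) = (#(U \ insert i D)).choose k := by
  rw [← card_powersetCard]
  refine card_bij' (fun S _ => S.erase i) (fun T _ => insert i T) ?_ ?_ ?_ ?_
  · intro S hS
    simp only [throughAvoiding, mem_filter, mem_powersetCard] at hS ⊢
    grind [disjoint_left, card_erase_of_mem]
  · intro T hT
    simp only [throughAvoiding, mem_filter, mem_powersetCard] at hT ⊢
    grind [disjoint_left]
  · intro S hS
    exact insert_erase (mem_filter.1 hS).2.1
  · intro T hT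
    exact erase_insert fun h => (mem_sdiff.1 ((mem_powersetCard.1 hT).1 h)).2 (mem_insert_self i D)

theorem card_throughAvoiding_of_subset (hiU : i ∈ U) (hiD : i ∉ D) (hDU : D ⊆ U) :
    #(throughAvoiding U (k + 1) i D) = (#U - #D - 1).choose k := by
  rw [card_throughAvoiding hiU hiD, card_sdiff_of_subset (insert_subset hiU hDU),
    card_insert_of_notMem hiD, Nat.sub_sub]

theorem card_meets_both_avoiding {A C : Finset α} {o : α} (hoA : o ∈ A) (hoC : o ∈ C) :
    (#{S ∈ U.powersetCard k | i ∈ S ∧ o ∉ S ∧ (S ∩ A).Nonempty ∧ (S ∩ C).Nonempty} : ℤ) =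
      #(throughAvoiding U k i {o}) - #(throughAvoiding U k i A) - #(throughAvoiding U k i C)
        + #(throughAvoiding U k i (A ∪ C)) := by
  have hmeets : {S ∈ U.powersetCard k | i ∈ S ∧ o ∉ S ∧ (S ∩ A).Nonempty ∧ (S ∩ C).Nonempty} =
      {S ∈ throughAvoiding U k i {o} | ¬Disjoint S A ∧ ¬Disjoint S C} := by
    ext S
    simp only [throughAvoiding, mem_filter, disjoint_singleton_right,
      not_disjoint_iff_nonempty_inter, and_assoc]
  have hboth : {S ∈ throughAvoiding U k i {o} | Disjoint S A ∧ Disjoint S C} =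
      {S ∈ throughAvoiding U k i {o} | Disjoint S (A ∪ C)} :=
    filter_congr fun S _ => disjoint_union_right.symm
  rw [hmeets, card_filter_not_and_not, hboth, filter_disjoint_throughAvoiding,
    filter_disjoint_throughAvoiding, filter_disjoint_throughAvoiding, singleton_union,
    singleton_union, singleton_union, insert_eq_of_mem hoA, insert_eq_of_mem hoC,
    insert_eq_of_mem (mem_union_left C hoA)]

end

theorem stmt_16 (n k : ℕ) (hk : 2 ≤ k) (hn : 2 * k ≤ n) :
    (∀ i, 1 ≤ i → i < 2 * k - 1 →
      (Nat.card {S : Finset ℕ // S ⊆ Finset.range n ∧ S.card = k ∧ i ∈ S ∧ 0 ∉ S ∧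
          (S ∩ Finset.range k).Nonempty ∧
          (S ∩ insert 0 (Finset.Ico k (2 * k - 1))).Nonempty} : ℤ)
        = ((n - 2).choose (k - 1) : ℤ) - ((n - k - 1).choose (k - 1) : ℤ)) ∧
    (∀ i, 2 * k - 1 ≤ i → i < n →
      (Nat.card {S : Finset ℕ // S ⊆ Finset.range n ∧ S.card = k ∧ i ∈ S ∧ 0 ∉ S ∧
          (S ∩ Finset.range k).Nonempty ∧
          (S ∩ insert 0 (Finset.Ico k (2 * k - 1))).Nonempty} : ℤ)
        = ((n - 2).choose (k - 1) : ℤ) - 2 * ((n - k - 1).choose (k - 1) : ℤ)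
            + ((n - 2 * k).choose (k - 1) : ℤ)) := by
  classical
  obtain ⟨m, rfl⟩ : ∃ m, k = m + 1 := ⟨k - 1, by omega⟩
  set A := range (m + 1)
  set C := insert 0 (Ico (m + 1) (2 * (m + 1) - 1))
  have hAC : A ∪ C = range (2 * (m + 1) - 1) := by
    ext x; simp only [A, C, mem_union, mem_range, mem_insert, mem_Ico]; omega
  have hC : #C = m + 1 := by
    rw [card_insert_of_notMem (by simp), Nat.card_Ico]; omega
  have hcount : ∀ i D, i < n → i ∉ D → D ⊆ A ∪ C →
      #(throughAvoiding (range n) (m + 1) i D) = (n - #D - 1).choose m := fun i D hi hiD hD => by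
    rw [card_throughAvoiding_of_subset (mem_range.2 hi) hiD
      (hD.trans (hAC ▸ range_subset_range.2 (by omega))), card_range]
  simp only [natCard_subtype_subset_card_eq, Nat.add_sub_cancel]
  refine ⟨fun i hi1 hi => ?_, fun i hi hin => ?_⟩
  all_goals rw [card_meets_both_avoiding (mem_range.2 (Nat.succ_pos m)) (mem_insert_self 0 _)]
  · have hiAC : i ∈ A ∪ C := hAC ▸ mem_range.2 hi
    rw [hcount i {0} (by omega) (by simp; omega) (by simp [A]),
      throughAvoiding_eq_empty hiAC, card_singleton]
    rcases lt_or_ge i (m + 1) with hiA | hiA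
    · rw [throughAvoiding_eq_empty (mem_range.2 hiA),
        hcount i C (by omega) (by simp [C]; omega) subset_union_right, hC]
      simp [Nat.sub_sub]
    · rw [throughAvoiding_eq_empty (mem_insert_of_mem (mem_Ico.2 ⟨hiA, hi⟩)),
        hcount i A (by omega) (by simp [A]; omega) subset_union_left, card_range]
      simp [Nat.sub_sub]
  · have hiAC : i ∉ A ∪ C := by rw [hAC, mem_range]; omega
    rw [hcount i {0} hin (by simp; omega) (by simp [A]),
      hcount i A hin (fun h => hiAC (mem_union_left C h)) subset_union_left,
      hcount i C hin (fun h => hiAC (mem_union_right A h)) subset_union_right,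
      hcount i (A ∪ C) hin hiAC subset_rfl, hAC, card_singleton, card_range, card_range, hC,
      show n - (2 * (m + 1) - 1) - 1 = n - 2 * (m + 1) by omega]
    simp only [Nat.sub_sub]
    ring
end
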